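/- arXiv:2512.15227 — 5 statements merged into one kernel-verified Lean document; each statement's English description precedes it below -/
import Mathlib

section
/- With α = (9 − √33)/24 and β = 23(1 + √33)/960, the leading dissipation coefficient vanishes: 36α⁴ − 72α³ − 6α² + 24α − 5 + 72β(1 − 3α)²(2α² − 4α + 1) = 0. -/
theorem dissipation_vanishes :
    let α : ℝ := (9 - Real.sqrt 33) / 24
    let β : ℝ := 23 * (1 + Real.sqrt 33) / 960
    36 * α ^ 4 - 72 * α ^ 3 - 6 * α ^ 2 + 24 * α - 5
      + 72 * β * (1 - 3 * α) ^ 2 * (2 * α ^ 2 - 4 * α + 1) = 0 := by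
  have h : Real.sqrt 33 ^ 2 = 33 := Real.sq_sqrt (by norm_num)
  intro α β
  simp only [α, β]
  set s := Real.sqrt 33
  linear_combination (-487/245760 - 361/81920 * s + 2081/737280 * s^2 + 23/245760 * s^3) * h
end

section
/- The cubic equation 2 − 20α + 35α² − 35α³ = 0 has exactly one real root, given by α = 1/3 − ((34300 + 525√6699)^{2/3} − 875)/(105 (34300 + 525√6699)^{1/3}). -/
/-!
Shifting `α = 1/3 + x` turns the cubic into `-35 (x³ + (5/21) x + 8/135)`. A depressed cubic
`x³ + p x + q` with `p ≥ 0` is strictly increasing, so it has exactly one real root, and Cardano's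
substitution `x = u - p / (3u)` produces it as soon as `u³` solves the resolvent quadratic
`w² + q w - (p/3)³ = 0`. Here `u = -t/105` with `t³ = 34300 + 525√6699`.
-/

theorem strictMono_cube_add_mul {p : ℝ} (hp : 0 ≤ p) : StrictMono fun x : ℝ => x ^ 3 + p * x :=
  (Odd.strictMono_pow (by decide)).add_monotone fun _ _ h => mul_le_mul_of_nonneg_left h hp

theorem cardano_isRoot {p q u : ℝ} (hu : u ≠ 0) (h : (u ^ 3) ^ 2 + q * u ^ 3 - (p / 3) ^ 3 = 0) :
    (u - p / (3 * u)) ^ 3 + p * (u - p / (3 * u)) + q = 0 := by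
  field_simp
  linear_combination 27 * h

theorem depressed_cubic_eq_zero_iff {p q u : ℝ} (hp : 0 ≤ p) (hu : u ≠ 0)
    (h : (u ^ 3) ^ 2 + q * u ^ 3 - (p / 3) ^ 3 = 0) (x : ℝ) :
    x ^ 3 + p * x + q = 0 ↔ x = u - p / (3 * u) := by
  rw [← cardano_isRoot hu h, add_left_inj]
  exact (strictMono_cube_add_mul hp).injective.eq_iff

theorem Real.rpow_one_third_pow_three {b : ℝ} (hb : 0 ≤ b) : (b ^ ((1 : ℝ) / 3)) ^ 3 = b := by
  rw [← Real.rpow_mul_natCast hb]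
  norm_num

theorem Real.rpow_two_thirds {b : ℝ} (hb : 0 ≤ b) :
    b ^ ((2 : ℝ) / 3) = (b ^ ((1 : ℝ) / 3)) ^ 2 := by
  rw [← Real.rpow_mul_natCast hb]
  norm_num

theorem cubic_unique_real_root (α : ℝ) :
    2 - 20 * α + 35 * α ^ 2 - 35 * α ^ 3 = 0 ↔
      α = 1 / 3 -
        ((34300 + 525 * Real.sqrt 6699) ^ ((2 : ℝ) / 3) - 875) /
          (105 * (34300 + 525 * Real.sqrt 6699) ^ ((1 : ℝ) / 3)) := by
  have hb : (0 : ℝ) ≤ 34300 + 525 * √6699 := by positivity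
  rw [Real.rpow_two_thirds hb]
  set t := (34300 + 525 * √6699) ^ ((1 : ℝ) / 3)
  have ht3 : t ^ 3 = 34300 + 525 * √6699 := Real.rpow_one_third_pow_three hb
  have ht : t ≠ 0 := (Real.rpow_pos_of_pos (by positivity) _).ne'
  have hu : -t / 105 ≠ 0 := by simpa using ht
  have hresolvent : (t ^ 3) ^ 2 - 68600 * t ^ 3 - 875 ^ 3 = 0 := by
    rw [ht3]
    linear_combination 525 ^ 2 * Real.sq_sqrt (show (0 : ℝ) ≤ 6699 by norm_num)
  have hres : ((-t / 105) ^ 3) ^ 2 + 8 / 135 * (-t / 105) ^ 3 - (5 / 21 / 3) ^ 3 = 0 := by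
    linear_combination hresolvent / 105 ^ 6
  have hshift : 2 - 20 * α + 35 * α ^ 2 - 35 * α ^ 3 =
      -35 * ((α - 1 / 3) ^ 3 + 5 / 21 * (α - 1 / 3) + 8 / 135) := by ring
  have hroot :
      1 / 3 - (t ^ 2 - 875) / (105 * t) = 1 / 3 + (-t / 105 - 5 / 21 / (3 * (-t / 105))) := by
    field_simp
    ring
  rw [hshift, mul_eq_zero, or_iff_right (by norm_num),
    depressed_cubic_eq_zero_iff (by norm_num) hu hres, hroot, sub_eq_iff_eq_add']
end

section
/- Let α = (4 − √6)/10. Then α satisfies (2α² + 2α − 1)/(72α − 24) = 1/20, and substituting this α into (α(2 − 48β) + 8β + α²(2 + 72β) − 1)/(48(3α − 1)) = 1/120 yields the unique solution β = (2 + 3√6)/50. -/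
theorem fifth_order_params :
    let α : ℝ := (4 - Real.sqrt 6) / 10
    ((2 * α ^ 2 + 2 * α - 1) / (72 * α - 24) = 1 / 20) ∧
      (∀ β : ℝ,
        (α * (2 - 48 * β) + 8 * β + α ^ 2 * (2 + 72 * β) - 1)
            / (48 * (3 * α - 1)) = 1 / 120 ↔
          β = (2 + 3 * Real.sqrt 6) / 50) := by
  intro α
  have hs : Real.sqrt 6 ^ 2 = 6 := Real.sq_sqrt (by norm_num)
  have hlb : (2 : ℝ) < Real.sqrt 6 := by
    nlinarith [Real.sqrt_nonneg 6, hs]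
  have hub : Real.sqrt 6 < 3 := by
    nlinarith [Real.sqrt_nonneg 6, hs]
  have hd1 : 72 * α - 24 ≠ 0 := by
    simp only [α]; intro h; nlinarith
  have hd2 : 48 * (3 * α - 1) ≠ 0 := by
    simp only [α]; intro h; nlinarith
  constructor
  · rw [div_eq_div_iff hd1 (by norm_num)]
    simp only [α]; nlinarith
  · intro β
    rw [div_eq_div_iff hd2 (by norm_num)]
    constructor
    · intro h
      simp only [α] at h
      have hne : Real.sqrt 6 - 2 ≠ 0 := by intro h'; nlinarith
      have key : (Real.sqrt 6 - 2) * (50 * β - (2 + 3 * Real.sqrt 6)) = 0 := by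
        nlinarith [h, hs]
      rcases mul_eq_zero.mp key with h' | h'
      · exact absurd h' hne
      · linarith
    · intro h
      subst h
      simp only [α]
      nlinarith [hs]
end

section
/- The 2-stage scheme with c₁ = (4 − √6)/10, c₂ = (4 + √6)/10, b₁ = (9 + √6)/36, b₂ = (9 − √6)/36, a₁₁ = (11 − 4√6)/100, a₂₁ = (2 + 3√6)/50, a₂₂ = (7 − 2√6)/100 satisfies all fifth-order conditions: b₁+b₂ = 1/2, b₁c₁+b₂c₂ = 1/6, b₁c₁²+b₂c₂² = 1/12, b₁c₁³+b₂c₂³ = 1/20, b₁a₁₁c₁ + b₂(a₂₁c₁ + a₂₂c₂) = 1/120, and the row-sum assumptions a₁₁ = c₁²/2, a₂₁ + a₂₂ = c₂²/2. -/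
theorem TDDIRK5s2_order_conditions :
    let c₁ : ℝ := (4 - Real.sqrt 6) / 10
    let c₂ : ℝ := (4 + Real.sqrt 6) / 10
    let b₁ : ℝ := (9 + Real.sqrt 6) / 36
    let b₂ : ℝ := (9 - Real.sqrt 6) / 36
    let a₁₁ : ℝ := (11 - 4 * Real.sqrt 6) / 100
    let a₂₁ : ℝ := (2 + 3 * Real.sqrt 6) / 50
    let a₂₂ : ℝ := (7 - 2 * Real.sqrt 6) / 100
    b₁ + b₂ = 1 / 2 ∧
    b₁ * c₁ + b₂ * c₂ = 1 / 6 ∧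
    b₁ * c₁ ^ 2 + b₂ * c₂ ^ 2 = 1 / 12 ∧
    b₁ * c₁ ^ 3 + b₂ * c₂ ^ 3 = 1 / 20 ∧
    b₁ * (a₁₁ * c₁) + b₂ * (a₂₁ * c₁ + a₂₂ * c₂) = 1 / 120 ∧
    a₁₁ = c₁ ^ 2 / 2 ∧
    a₂₁ + a₂₂ = c₂ ^ 2 / 2 := by
  have h : Real.sqrt 6 ^ 2 = 6 := Real.sq_sqrt (by norm_num)
  have h3 : Real.sqrt 6 ^ 3 = 6 * Real.sqrt 6 := by rw [pow_succ, h]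
  refine ⟨by nlinarith [h, h3], by nlinarith [h, h3], by nlinarith [h, h3], by nlinarith [h, h3],
    by nlinarith [h, h3], by nlinarith [h, h3], by nlinarith [h, h3]⟩
end

section
/- For c₂ = (5 − √5)/10 and c₃ = (5 + √5)/10, the weights b₁ = 1/12, b₂ = (5 + √5)/24, b₃ = 5/(6(5 + √5)) satisfy b₁ + b₂ + b₃ = 1/2, b₂c₂ + b₃c₃ = 1/6, b₂c₂² + b₃c₃² = 1/12, and b₂c₂³ + b₃c₃³ = 1/20. -/
/-!
Both interior weights satisfy `bᵢ cᵢ = 1/12`, so `b₂ c₂ᵏ + b₃ c₃ᵏ = (c₂ᵏ⁻¹ + c₃ᵏ⁻¹) / 12` and the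
order conditions reduce to power sums of the nodes, which are the roots of `c² - c + 1/5`.
(The `bᵢ` are the Lobatto weights `1/12, 5/12, 5/12` times `1 - cᵢ`, i.e. a quadrature rule for
`∫₀¹ (1 - c) f(c) dc`.)
-/

section QuadratureMoments

variable {K : Type*} [Field K] [CharZero K] {x y u v : K}

theorem weights_eq_of_mul_eq_one_div_twelve (hxy : x * y = 1 / 5)
    (hu : u * x = 1 / 12) (hv : v * y = 1 / 12) : u = 5 * y / 12 ∧ v = 5 * x / 12 := by
  constructor
  · linear_combination (-5 * u) * hxy + 5 * y * hu
  · linear_combination (-5 * v) * hxy + 5 * x * hv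

theorem moments_of_nodes_of_mul_eq_one_div_twelve (hsum : x + y = 1) (hxy : x * y = 1 / 5)
    (hu : u * x = 1 / 12) (hv : v * y = 1 / 12) :
    1 / 12 + u + v = 1 / 2 ∧
    u * x + v * y = 1 / 6 ∧
    u * x ^ 2 + v * y ^ 2 = 1 / 12 ∧
    u * x ^ 3 + v * y ^ 3 = 1 / 20 := by
  obtain ⟨rfl, rfl⟩ := weights_eq_of_mul_eq_one_div_twelve hxy hu hv
  have hsq : x ^ 2 + y ^ 2 = 3 / 5 := by
    linear_combination (x + y + 1) * hsum - 2 * hxy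
  refine ⟨?_, ?_, ?_, ?_⟩
  · linear_combination 5 / 12 * hsum
  · linear_combination hu + hv
  · linear_combination x * hv + y * hu + 1 / 12 * hsum
  · linear_combination x ^ 2 * hv + y ^ 2 * hu + 1 / 12 * hsq

end QuadratureMoments

theorem OTDDIRK5s3_order_conditions :
    let c₂ : ℝ := (5 - Real.sqrt 5) / 10
    let c₃ : ℝ := (5 + Real.sqrt 5) / 10
    let b₁ : ℝ := 1 / 12
    let b₂ : ℝ := (5 + Real.sqrt 5) / 24
    let b₃ : ℝ := 5 / (6 * (5 + Real.sqrt 5))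
    b₁ + b₂ + b₃ = 1 / 2 ∧
    b₂ * c₂ + b₃ * c₃ = 1 / 6 ∧
    b₂ * c₂ ^ 2 + b₃ * c₃ ^ 2 = 1 / 12 ∧
    b₂ * c₂ ^ 3 + b₃ * c₃ ^ 3 = 1 / 20 := by
  intro c₂ c₃ b₁ b₂ b₃
  have hsqrt : Real.sqrt 5 ^ 2 = 5 := Real.sq_sqrt (by norm_num)
  have hpos : 5 + Real.sqrt 5 ≠ 0 := by positivity
  have hsum : c₂ + c₃ = 1 := by ring
  have hprod : c₂ * c₃ = 1 / 5 := by linear_combination (-1 / 100) * hsqrt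
  have hb₂ : b₂ * c₂ = 1 / 12 := by linear_combination (-1 / 240) * hsqrt
  have hb₃ : b₃ * c₃ = 1 / 12 := by
    simp only [b₃, c₃]
    field_simp
    ring
  exact moments_of_nodes_of_mul_eq_one_div_twelve hsum hprod hb₂ hb₃
end
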